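/- Under hypotheses (a1)–(a5), suppose that for every a ∈ (0, K) the following implication holds: if max_{x ∈ [a,K]} f(x) > K, then min_{x ∈ [K, max_{y ∈ [a,K]} f(y)]} f(x) > a. Then every solution x of the initial value problem for the distributed-delay equation satisfies lim_{t→∞} x(t) = K. -/

import Mathlib

/-!
Write `F u = ∫ f (x s) ∂μ u`, so that `x' = r (F - x)` and `F u` lies between the extreme values
of `f ∘ x` on the delay window `[h u, u]`. A continuous `x` whose increments are integrals of
`r (F - x)` cannot cross a level `q` upwards while `F ≤ q`, nor downwards while `F ≥ q`. This
traps the solution: it satisfies `x t ≥ x 0 * exp (-C t)` as long as `F ≥ 0`, hence stays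
positive; it stays below any `Q > max (K, max_{[0,K]} f, sup |φ|)` because then
`max_{[0,Q]} f < Q`; and it eventually stays above a small `c > 0` with `c < min_{[c,Q]} f`.

With `m = liminf x` and `M = limsup x`, the divergence of `∫ r` turns the eventual bounds
`m - ε ≤ x ≤ M + ε` into `M ≤ max_{[m,M]} f` and `min_{[m,M]} f ≤ m`. As `f` crosses the
diagonal only at `K`, this forces `m ≤ K ≤ M`. If `M > K`, the maximum of `f` on `[m, M]` is
attained in `[m, K)`, so `M ≤ max_{[m,K]} f`, and the min-max condition at `a = m` makes
`f > m` on all of `[m, M]`, a contradiction. Hence `M = K`, and then `m = K` likewise.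
-/

open MeasureTheory Filter Set Real

section Crossing

variable {x g : ℝ → ℝ} {a b q : ℝ}

theorem exists_first_ge (hx : ContinuousOn x (Icc a b)) (hab : a ≤ b) (hb : q ≤ x b) :
    ∃ c ∈ Icc a b, q ≤ x c ∧ ∀ s ∈ Ico a c, x s < q := by
  set S := Icc a b ∩ x ⁻¹' Ici q
  have hS : IsClosed S := hx.preimage_isClosed_of_isClosed isClosed_Icc isClosed_Ici
  have hbdd : BddBelow S := bddBelow_Icc.mono inter_subset_left
  obtain ⟨hc, hxc⟩ := hS.csInf_mem ⟨b, ⟨hab, le_rfl⟩, hb⟩ hbdd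
  refine ⟨sInf S, hc, hxc, fun s hs => not_le.1 fun hxs => ?_⟩
  exact (csInf_le hbdd ⟨⟨hs.1, hs.2.le.trans hc.2⟩, hxs⟩).not_gt hs.2

theorem exists_first_le (hx : ContinuousOn x (Icc a b)) (hab : a ≤ b) (hb : x b ≤ q) :
    ∃ c ∈ Icc a b, x c ≤ q ∧ ∀ s ∈ Ico a c, q < x s := by
  obtain ⟨c, hc, hxc, hpre⟩ := exists_first_ge (q := -q) hx.neg hab (neg_le_neg hb)
  exact ⟨c, hc, neg_le_neg_iff.1 hxc, fun s hs => neg_lt_neg_iff.1 (hpre s hs)⟩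

theorem le_of_integrand_nonneg_below (hx : ContinuousOn x (Icc a b)) (hab : a ≤ b)
    (hinc : ∀ c ∈ Icc a b, x b - x c = ∫ u in c..b, g u)
    (hg : ∀ᵐ u, u ∈ Ioo a b → x u < q → 0 ≤ g u) (ha : q ≤ x a) : q ≤ x b := by
  by_contra! hb
  set S := Icc a b ∩ x ⁻¹' Ici q
  have hS : IsClosed S := hx.preimage_isClosed_of_isClosed isClosed_Icc isClosed_Ici
  have hbdd : BddAbove S := bddAbove_Icc.mono inter_subset_left
  obtain ⟨hc, hxc⟩ := hS.csSup_mem ⟨a, ⟨le_rfl, hab⟩, ha⟩ hbdd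
  have hbelow : ∀ u ∈ Ioc (sSup S) b, x u < q := fun u hu => not_le.1 fun hxu =>
    (le_csSup hbdd ⟨⟨hc.1.trans hu.1.le, hu.2⟩, hxu⟩).not_gt hu.1
  have hcb : sSup S ≤ b := hc.2
  have hint : 0 ≤ ∫ u in sSup S..b, g u := by
    rw [intervalIntegral.integral_of_le hcb, integral_Ioc_eq_integral_Ioo]
    refine setIntegral_nonneg_ae measurableSet_Ioo (hg.mono fun u hgu hu => ?_)
    exact hgu ⟨hc.1.trans_lt hu.1, hu.2⟩ (hbelow u (Ioo_subset_Ioc_self hu))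
  have hxc' : q ≤ x (sSup S) := hxc
  linarith [hinc _ hc]

end Crossing

theorem image_Icc_eq_image_lineMap (f : ℝ → ℝ) {a b : ℝ} (hab : a ≤ b) :
    f '' Icc a b = (fun t => f (AffineMap.lineMap a b t)) '' Icc (0 : ℝ) 1 := by
  rw [← segment_eq_Icc hab, segment_eq_image_lineMap, image_image]

theorem continuous_lineMap_thickening {f : ℝ → ℝ} (hf : Continuous f) (a b : ℝ) :
    Continuous fun p : ℝ × ℝ => f (AffineMap.lineMap (a - p.1) (b + p.1) p.2) := by
  simp only [AffineMap.lineMap_apply_ring']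
  fun_prop

theorem le_sSup_image_Icc_of_forall_pos {f : ℝ → ℝ} {a b c : ℝ} (hf : Continuous f) (hab : a ≤ b)
    (h : ∀ ε > 0, c ≤ sSup (f '' Icc (a - ε) (b + ε))) : c ≤ sSup (f '' Icc a b) := by
  -- parametrised over the fixed compact `Icc 0 1`, the supremum is continuous in `ε`
  have hcont := (isCompact_Icc (a := (0 : ℝ)) (b := 1)).continuous_sSup
    (f := fun ε t => f (AffineMap.lineMap (a - ε) (b + ε) t)) (continuous_lineMap_thickening hf a b)
  have heq : ∀ ε ≥ 0, sSup (f '' Icc (a - ε) (b + ε)) =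
      sSup ((fun t => f (AffineMap.lineMap (a - ε) (b + ε) t)) '' Icc (0 : ℝ) 1) := fun ε hε => by
    rw [image_Icc_eq_image_lineMap f (by linarith)]
  rw [← sub_zero a, ← add_zero b, heq 0 le_rfl]
  refine ge_of_tendsto ((hcont.tendsto 0).mono_left (nhdsWithin_le_nhds (s := Ioi 0)))
    (eventually_nhdsWithin_of_forall fun ε hε => ?_)
  exact (h ε hε).trans_eq (heq ε (le_of_lt hε))

theorem sInf_image_Icc_le_of_forall_pos {f : ℝ → ℝ} {a b c : ℝ} (hf : Continuous f) (hab : a ≤ b)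
    (h : ∀ ε > 0, sInf (f '' Icc (a - ε) (b + ε)) ≤ c) : sInf (f '' Icc a b) ≤ c := by
  have hcont := (isCompact_Icc (a := (0 : ℝ)) (b := 1)).continuous_sInf
    (f := fun ε t => f (AffineMap.lineMap (a - ε) (b + ε) t)) (continuous_lineMap_thickening hf a b)
  have heq : ∀ ε ≥ 0, sInf (f '' Icc (a - ε) (b + ε)) =
      sInf ((fun t => f (AffineMap.lineMap (a - ε) (b + ε) t)) '' Icc (0 : ℝ) 1) := fun ε hε => by
    rw [image_Icc_eq_image_lineMap f (by linarith)]
  rw [← sub_zero a, ← add_zero b, heq 0 le_rfl]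
  refine le_of_tendsto ((hcont.tendsto 0).mono_left (nhdsWithin_le_nhds (s := Ioi 0)))
    (eventually_nhdsWithin_of_forall fun ε hε => ?_)
  exact (heq ε (le_of_lt hε)).symm.trans_le (h ε hε)

theorem tendsto_intervalIntegral_atTop_of_not_integrableOn {r : ℝ → ℝ} {b : ℝ}
    (hr : ∀ u, 0 ≤ r u) (hloc : LocallyIntegrable r) (hdiv : ¬ IntegrableOn r (Ici b)) (a : ℝ) :
    Tendsto (fun t => ∫ u in a..t, r u) atTop atTop := by
  have hint : ∀ c d, IntervalIntegrable r volume c d := fun c d =>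
    (hloc.integrableOn_isCompact isCompact_uIcc).intervalIntegrable
  refine tendsto_atTop_atTop_of_monotone (fun t₁ t₂ ht => ?_) fun B => ?_
  · rw [← intervalIntegral.integral_add_adjacent_intervals (hint a t₁) (hint t₁ t₂)]
    exact le_add_of_nonneg_right (intervalIntegral.integral_nonneg ht fun u _ => hr u)
  · by_contra! hB
    refine hdiv (((hloc.integrableOn_isCompact isCompact_Icc).union ?_).mono_set
      fun s (hs : b ≤ s) => (le_or_gt s a).imp (fun h => ⟨hs, h⟩) id)
    refine integrableOn_Ioi_of_intervalIntegral_norm_bounded B a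
      (fun t => (hloc.integrableOn_isCompact isCompact_Icc).mono_set Ioc_subset_Icc_self)
      tendsto_id (.of_forall fun t => ?_)
    simpa only [id, Real.norm_of_nonneg (hr _)] using (hB t).le

theorem integral_le_of_forall_mem_Icc_le {ν : Measure ℝ} [IsProbabilityMeasure ν] {g : ℝ → ℝ}
    {a b q : ℝ} (hg : Continuous g) (hν : ν (Icc a b)ᶜ = 0) (hq : ∀ s ∈ Icc a b, g s ≤ q) :
    ∫ s, g s ∂ν ≤ q := by
  have hae : ∀ᵐ s ∂ν, s ∈ Icc a b := ae_iff.2 hν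
  obtain ⟨D, hD⟩ := (isCompact_Icc (a := a) (b := b)).exists_bound_of_continuousOn hg.continuousOn
  have hint : Integrable g ν :=
    (integrable_const D).mono' hg.aestronglyMeasurable (hae.mono fun s hs => hD s hs)
  calc ∫ s, g s ∂ν ≤ ∫ _, q ∂ν := integral_mono_ae hint (integrable_const q) (hae.mono hq)
    _ = q := by simp

theorem le_integral_of_forall_mem_Icc_le {ν : Measure ℝ} [IsProbabilityMeasure ν] {g : ℝ → ℝ}
    {a b q : ℝ} (hg : Continuous g) (hν : ν (Icc a b)ᶜ = 0) (hq : ∀ s ∈ Icc a b, q ≤ g s) :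
    q ≤ ∫ s, g s ∂ν := by
  have := integral_le_of_forall_mem_Icc_le (g := fun s => -g s) hg.neg hν fun s hs =>
    neg_le_neg (hq s hs)
  rw [integral_neg] at this
  linarith

structure CrossesDiagonalAt (f : ℝ → ℝ) (K : ℝ) : Prop where
  lt_apply : ∀ y, 0 < y → y < K → y < f y
  apply_pos : ∀ y, K < y → 0 < f y
  apply_lt : ∀ y, K < y → f y < y

namespace CrossesDiagonalAt

variable {f : ℝ → ℝ} {K : ℝ}

theorem apply_eq (hd : CrossesDiagonalAt f K) (hf : Continuous f) (hK : 0 < K) : f K = K := by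
  have hright : K ∈ closure (Ioi K) := by
    rw [closure_Ioi]
    exact self_mem_Ici
  have hleft : K ∈ closure (Ioo 0 K) := by
    rw [closure_Ioo hK.ne]
    exact right_mem_Icc.2 hK.le
  exact le_antisymm
    ((isClosed_le hf continuous_id).closure_subset_iff.2
      (fun y (hy : y ∈ Ioi K) => (hd.apply_lt y hy).le) hright)
    ((isClosed_le continuous_id hf).closure_subset_iff.2
      (fun y (hy : y ∈ Ioo 0 K) => (hd.lt_apply y hy.1 hy.2).le) hleft)

theorem lt_apply_of_mem_Icc (hd : CrossesDiagonalAt f K) (hf : Continuous f) (hK : 0 < K)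
    {m y : ℝ} (hm : 0 < m) (hmK : m < K) (hy : y ∈ Icc m K) : m < f y := by
  rcases hy.2.lt_or_eq with hyK | rfl
  · exact hy.1.trans_lt (hd.lt_apply y (hm.trans_le hy.1) hyK)
  · rwa [hd.apply_eq hf hK]

theorem apply_lt_of_mem_Icc (hd : CrossesDiagonalAt f K) (hf : Continuous f) (hK : 0 < K)
    {M y : ℝ} (hKM : K < M) (hy : y ∈ Icc K M) : f y < M := by
  rcases hy.1.lt_or_eq with hKy | rfl
  · exact (hd.apply_lt y hKy).trans_le hy.2
  · rwa [hd.apply_eq hf hK]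

theorem sSup_image_Icc_lt (hd : CrossesDiagonalAt f K) (hf : Continuous f) {a Q : ℝ}
    (haQ : a ≤ Q) (hQ : sSup (f '' Icc a K) < Q) : sSup (f '' Icc a Q) < Q := by
  obtain ⟨y, hy, hsup, -⟩ :=
    isCompact_Icc.exists_sSup_image_eq_and_ge (nonempty_Icc.2 haQ) hf.continuousOn
  rw [hsup]
  rcases le_or_gt y K with hyK | hKy
  · exact (le_csSup (isCompact_Icc.bddAbove_image hf.continuousOn)
      (mem_image_of_mem f ⟨hy.1, hyK⟩)).trans_lt hQ
  · exact (hd.apply_lt y hKy).trans_le hy.2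

theorem exists_lt_sInf_image_Icc (hd : CrossesDiagonalAt f K) (hf : Continuous f) (hK : 0 < K)
    {Q d : ℝ} (hKQ : K ≤ Q) (hd0 : 0 < d) : ∃ c, 0 < c ∧ c < d ∧ c < sInf (f '' Icc c Q) := by
  obtain ⟨y₁, hy₁, -, hmin⟩ :=
    isCompact_Icc.exists_sInf_image_eq_and_le (nonempty_Icc.2 hKQ) hf.continuousOn
  have hρ : 0 < f y₁ := by
    rcases hy₁.1.lt_or_eq with hKy | rfl
    · exact hd.apply_pos _ hKy
    · rwa [hd.apply_eq hf hK]
  set c := min (min K (f y₁)) d / 2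
  have hc0 : 0 < c := by positivity
  have hc : c < min (min K (f y₁)) d := half_lt_self (lt_min (lt_min hK hρ) hd0)
  have hcK : c < K := hc.trans_le ((min_le_left _ _).trans (min_le_left _ _))
  refine ⟨c, hc0, hc.trans_le (min_le_right _ _), ?_⟩
  obtain ⟨y₂, hy₂, hinf, -⟩ :=
    isCompact_Icc.exists_sInf_image_eq_and_le (nonempty_Icc.2 (hcK.le.trans hKQ)) hf.continuousOn
  rw [hinf]
  rcases lt_or_ge y₂ K with hy₂K | hKy₂
  · exact hy₂.1.trans_lt (hd.lt_apply y₂ (hc0.trans_le hy₂.1) hy₂K)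
  · exact (hc.trans_le ((min_le_left _ _).trans (min_le_right _ _))).trans_le
      (hmin y₂ ⟨hKy₂, hy₂.2⟩)

theorem le_of_le_sSup (hd : CrossesDiagonalAt f K) (hf : Continuous f) (hK : 0 < K) {m M : ℝ}
    (hmM : m ≤ M) (hM : M ≤ sSup (f '' Icc m M)) : m ≤ K := by
  by_contra! hKm
  obtain ⟨y, hy, hsup, -⟩ :=
    isCompact_Icc.exists_sSup_image_eq_and_ge (nonempty_Icc.2 hmM) hf.continuousOn
  exact (hd.apply_lt_of_mem_Icc hf hK (hKm.trans_le hmM) ⟨hKm.le.trans hy.1, hy.2⟩).not_ge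
    (hsup ▸ hM)

theorem le_of_sInf_le (hd : CrossesDiagonalAt f K) (hf : Continuous f) (hK : 0 < K) {m M : ℝ}
    (hm : 0 < m) (hmM : m ≤ M) (hm' : sInf (f '' Icc m M) ≤ m) : K ≤ M := by
  by_contra! hMK
  obtain ⟨y, hy, hinf, -⟩ :=
    isCompact_Icc.exists_sInf_image_eq_and_le (nonempty_Icc.2 hmM) hf.continuousOn
  exact (hd.lt_apply_of_mem_Icc hf hK hm (hmM.trans_lt hMK) ⟨hy.1, hy.2.trans hMK.le⟩).not_ge
    (hinf ▸ hm')

theorem eq_of_le_sSup_of_sInf_le (hd : CrossesDiagonalAt f K) (hf : Continuous f) (hK : 0 < K)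
    {m M : ℝ} (hcond : m < K → K < sSup (f '' Icc m K) →
      m < sInf (f '' Icc K (sSup (f '' Icc m K))))
    (hm : 0 < m) (hmM : m ≤ M) (hM : M ≤ sSup (f '' Icc m M)) (hm' : sInf (f '' Icc m M) ≤ m) :
    m = K ∧ M = K := by
  obtain ⟨z, hz, hinf, -⟩ :=
    isCompact_Icc.exists_sInf_image_eq_and_le (nonempty_Icc.2 hmM) hf.continuousOn
  have hfz : f z ≤ m := hinf ▸ hm'
  have hMK : M = K := by
    by_contra hne
    have hKM : K < M := (hd.le_of_sInf_le hf hK hm hmM hm').lt_of_ne' hne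
    obtain ⟨y, hy, hsup, -⟩ :=
      isCompact_Icc.exists_sSup_image_eq_and_ge (nonempty_Icc.2 hmM) hf.continuousOn
    have hyK : y < K := not_le.1 fun hKy =>
      (hd.apply_lt_of_mem_Icc hf hK hKM ⟨hKy, hy.2⟩).not_ge (hsup ▸ hM)
    have hmK : m < K := hy.1.trans_lt hyK
    have hMS : M ≤ sSup (f '' Icc m K) := (hsup ▸ hM).trans
      (le_csSup (isCompact_Icc.bddAbove_image hf.continuousOn) ⟨y, ⟨hy.1, hyK.le⟩, rfl⟩)
    rcases le_or_gt z K with hzK | hKz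
    · exact (hd.lt_apply_of_mem_Icc hf hK hm hmK ⟨hz.1, hzK⟩).not_ge hfz
    · refine ((hcond hmK (hKM.trans_le hMS)).trans_le ?_).not_ge hfz
      exact csInf_le (isCompact_Icc.bddBelow_image hf.continuousOn)
        (mem_image_of_mem f ⟨hKz.le, hz.2.trans hMS⟩)
  refine ⟨(hd.le_of_le_sSup hf hK hmM hM).eq_of_not_lt fun hmK => ?_, hMK⟩
  exact (hd.lt_apply_of_mem_Icc hf hK hm hmK ⟨hz.1, hMK ▸ hz.2⟩).not_ge hfz

end CrossesDiagonalAt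

/-- `x` solves `x' = r (F - x)` on `[0, ∞)` in integrated form. -/
structure IsRelaxation (r F x : ℝ → ℝ) : Prop where
  continuous : Continuous x
  rate_nonneg : ∀ u, 0 ≤ r u
  integrableOn : ∀ b, IntegrableOn (fun u => r u * (F u - x u)) (Icc 0 b)
  eq_integral : ∀ t, 0 ≤ t → x t = x 0 + ∫ u in 0..t, r u * (F u - x u)

namespace IsRelaxation

variable {r F x : ℝ → ℝ}

theorem neg (hs : IsRelaxation r F x) : IsRelaxation r (fun u => -F u) (fun u => -x u) where
  continuous := hs.continuous.neg
  rate_nonneg := hs.rate_nonneg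
  integrableOn b := by
    convert (hs.integrableOn b).neg using 1
    ext u
    simp only [Pi.neg_apply]
    ring
  eq_integral t ht := by
    have : (fun u => r u * (-F u - -x u)) = fun u => -(r u * (F u - x u)) := funext fun u => by ring
    rw [this, intervalIntegral.integral_neg, hs.eq_integral t ht]
    ring

theorem intervalIntegrable (hs : IsRelaxation r F x) {a b : ℝ} (ha : 0 ≤ a) (hab : a ≤ b) :
    IntervalIntegrable (fun u => r u * (F u - x u)) volume a b :=
  ((hs.integrableOn b).mono_set
    (by rw [uIcc_of_le hab]; exact Icc_subset_Icc_left ha)).intervalIntegrable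

theorem sub_eq_integral (hs : IsRelaxation r F x) {a b : ℝ} (ha : 0 ≤ a) (hab : a ≤ b) :
    x b - x a = ∫ u in a..b, r u * (F u - x u) := by
  rw [hs.eq_integral b (ha.trans hab), hs.eq_integral a ha,
    ← intervalIntegral.integral_add_adjacent_intervals (hs.intervalIntegrable le_rfl ha)
      (hs.intervalIntegrable ha hab)]
  ring

theorem ge_of_ge (hs : IsRelaxation r F x) {T t q : ℝ} (hT : 0 ≤ T) (hTt : T ≤ t) (hxT : q ≤ x T)
    (hF : ∀ u ∈ Ioo T t, q ≤ F u) : q ≤ x t := by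
  refine le_of_integrand_nonneg_below hs.continuous.continuousOn hTt
    (fun c hc => hs.sub_eq_integral (hT.trans hc.1) hc.2) (.of_forall fun u hu hxu => ?_) hxT
  exact mul_nonneg (hs.rate_nonneg u) (by linarith [hF u hu])

theorem le_of_le (hs : IsRelaxation r F x) {T t q : ℝ} (hT : 0 ≤ T) (hTt : T ≤ t) (hxT : x T ≤ q)
    (hF : ∀ u ∈ Ioo T t, F u ≤ q) : x t ≤ q :=
  neg_le_neg_iff.1 <| hs.neg.ge_of_ge hT hTt (neg_le_neg hxT) fun u hu => neg_le_neg (hF u hu)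

theorem lt_of_forall_le (hs : IsRelaxation r F x) {T ℓ q t : ℝ} (hT : 0 ≤ T) (hℓq : ℓ < q)
    (hxT : x T ≤ ℓ) (hF : ∀ u, T < u → (∀ s ∈ Icc T u, x s < q) → F u ≤ ℓ) (ht : T ≤ t) :
    x t < q := by
  by_contra! hxt
  obtain ⟨c, hc, hxc, hpre⟩ := exists_first_ge hs.continuous.continuousOn ht hxt
  have := hs.le_of_le hT hc.1 hxT fun u hu =>
    hF u hu.1 fun s hs' => hpre s ⟨hs'.1, hs'.2.trans_lt hu.2⟩
  linarith

theorem lt_of_forall_ge (hs : IsRelaxation r F x) {T ℓ q t : ℝ} (hT : 0 ≤ T) (hqℓ : q < ℓ)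
    (hxT : ℓ ≤ x T) (hF : ∀ u, T < u → (∀ s ∈ Icc T u, q < x s) → ℓ ≤ F u) (ht : T ≤ t) :
    q < x t :=
  neg_lt_neg_iff.1 <| hs.neg.lt_of_forall_le hT (neg_lt_neg hqℓ) (neg_le_neg hxT)
    (fun u hu hx => neg_le_neg (hF u hu fun s hs' => neg_lt_neg_iff.1 (hx s hs'))) ht

theorem mul_exp_le (hs : IsRelaxation r F x) {C t : ℝ} (hrC : ∀ᵐ u, r u ≤ C) (hx0 : 0 ≤ x 0)
    (ht : 0 ≤ t) (hF : ∀ u ∈ Ioo 0 t, 0 ≤ F u) : x 0 * exp (-(C * t)) ≤ x t := by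
  set p : ℝ → ℝ := fun u => x 0 * exp (-(C * u))
  have hp_cont : Continuous p := by fun_prop
  have hCp : ∀ a b, IntervalIntegrable (fun u => C * p u) volume a b := fun a b =>
    (continuous_const.mul hp_cont).intervalIntegrable a b
  have hp : ∀ c, p c - p t = ∫ u in c..t, C * p u := fun c => by
    rw [intervalIntegral.integral_eq_sub_of_hasDerivAt (f := fun u => -p u) (fun u _ => ?_)
      (hCp c t)]
    · ring
    · convert ((((hasDerivAt_id u).const_mul C).neg.exp).const_mul (x 0)).neg using 1
      · ext v
        simp [p]
      · simp only [p, Pi.neg_apply, id]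
        ring
  have hnonneg := le_of_integrand_nonneg_below (x := fun u => x u - p u) (q := 0)
    (g := fun u => r u * (F u - x u) + C * p u) (hs.continuous.sub hp_cont).continuousOn ht
    (fun c hc => ?_) ?_ (by simp [p])
  · simp only [p] at hnonneg ⊢
    linarith
  · rw [intervalIntegral.integral_add (hs.intervalIntegrable hc.1 hc.2)
      (hCp c t), ← hp, ← hs.sub_eq_integral hc.1 hc.2]
    ring
  · filter_upwards [hrC] with u hru hu hxu
    have hpu : 0 ≤ p u := by positivity
    have h1 : 0 ≤ r u * F u := mul_nonneg (hs.rate_nonneg u) (hF u hu)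
    have h2 : r u * x u ≤ r u * p u := mul_le_mul_of_nonneg_left (by linarith) (hs.rate_nonneg u)
    have h3 : r u * p u ≤ C * p u := mul_le_mul_of_nonneg_right hru hpu
    rw [mul_sub]
    linarith

theorem pos (hs : IsRelaxation r F x) {C t : ℝ} (hrC : ∀ᵐ u, r u ≤ C) (hx0 : 0 < x 0)
    (hF : ∀ u, 0 < u → (∀ s ∈ Icc 0 u, 0 < x s) → 0 ≤ F u) (ht : 0 ≤ t) : 0 < x t := by
  by_contra! hxt
  obtain ⟨c, hc, hxc, hpre⟩ := exists_first_le hs.continuous.continuousOn ht hxt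
  have := hs.mul_exp_le hrC hx0.le hc.1 fun u hu =>
    hF u hu.1 fun s hs' => hpre s ⟨hs'.1, hs'.2.trans_lt hu.2⟩
  have : 0 < x 0 * exp (-(C * c)) := by positivity
  linarith

theorem eventually_le_add (hs : IsRelaxation r F x) (hloc : LocallyIntegrable r)
    (hdiv : ∀ a, Tendsto (fun t => ∫ u in a..t, r u) atTop atTop) {B β ε : ℝ}
    (hB : ∀ᶠ t in atTop, B ≤ x t) (hF : ∀ᶠ u in atTop, F u ≤ β) (hε : 0 < ε) :
    ∀ᶠ t in atTop, x t ≤ β + ε := by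
  obtain ⟨T, hT⟩ := eventually_atTop.1 (hF.and (eventually_ge_atTop 0))
  have hT0 : 0 ≤ T := (hT T le_rfl).2
  by_cases hdip : ∃ t₀, T ≤ t₀ ∧ x t₀ ≤ β + ε
  · obtain ⟨t₀, hTt₀, hxt₀⟩ := hdip
    filter_upwards [eventually_ge_atTop t₀] with t ht
    exact hs.le_of_le (hT0.trans hTt₀) ht hxt₀ fun u hu =>
      (hT u (hTt₀.trans hu.1.le)).1.trans (by linarith)
  -- otherwise `x' ≤ -ε r` on `[T, ∞)`, and the divergence of `∫ r` drives `x` below `B`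
  push Not at hdip
  have hdrop : ∀ t, T ≤ t → x t ≤ x T - ε * ∫ u in T..t, r u := fun t ht => by
    have hr : ∀ c d, IntervalIntegrable r volume c d := fun c d =>
      (hloc.integrableOn_isCompact isCompact_uIcc).intervalIntegrable
    have := intervalIntegral.integral_mono_on ht (hs.intervalIntegrable hT0 ht)
      ((hr T t).const_mul (-ε)) fun u hu => by
        have : F u - x u ≤ -ε := by linarith [(hT u hu.1).1, hdip u hu.1]
        nlinarith [hs.rate_nonneg u]
    rw [intervalIntegral.integral_const_mul, ← hs.sub_eq_integral hT0 ht] at this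
    linarith
  filter_upwards [hB, eventually_ge_atTop T,
    ((hdiv T).const_mul_atTop hε).eventually_ge_atTop (x T - B + 1)] with t hBt hTt hbig
  linarith [hdrop t hTt]

theorem eventually_sub_le (hs : IsRelaxation r F x) (hloc : LocallyIntegrable r)
    (hdiv : ∀ a, Tendsto (fun t => ∫ u in a..t, r u) atTop atTop) {B β ε : ℝ}
    (hB : ∀ᶠ t in atTop, x t ≤ B) (hF : ∀ᶠ u in atTop, β ≤ F u) (hε : 0 < ε) :
    ∀ᶠ t in atTop, β - ε ≤ x t := by
  filter_upwards [hs.neg.eventually_le_add hloc hdiv (hB.mono fun t => neg_le_neg)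
    (hF.mono fun u => neg_le_neg) hε] with t ht
  linarith

theorem limsup_le (hs : IsRelaxation r F x) (hloc : LocallyIntegrable r)
    (hdiv : ∀ a, Tendsto (fun t => ∫ u in a..t, r u) atTop atTop) {B β : ℝ}
    (hB : ∀ᶠ t in atTop, B ≤ x t) (hF : ∀ᶠ u in atTop, F u ≤ β) : limsup x atTop ≤ β :=
  le_of_forall_pos_le_add fun _ hε => limsup_le_of_le (isCoboundedUnder_le_of_eventually_le _ hB)
    (hs.eventually_le_add hloc hdiv hB hF hε)

theorem le_liminf (hs : IsRelaxation r F x) (hloc : LocallyIntegrable r)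
    (hdiv : ∀ a, Tendsto (fun t => ∫ u in a..t, r u) atTop atTop) {B β : ℝ}
    (hB : ∀ᶠ t in atTop, x t ≤ B) (hF : ∀ᶠ u in atTop, β ≤ F u) : β ≤ liminf x atTop :=
  le_of_forall_pos_le_add fun _ hε => sub_le_iff_le_add.1 <|
    le_liminf_of_le (isCoboundedUnder_ge_of_eventually_le _ hB)
      (hs.eventually_sub_le hloc hdiv hB hF hε)

end IsRelaxation

/-- What the argument uses of `F u = ∫ f (x s) ∂μ u` with `μ u` a probability measure on
`[h u, u]`. -/
structure IsDelayAverage (f h x F : ℝ → ℝ) : Prop where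
  le_of_forall_le : ∀ u, 0 ≤ u → ∀ q, (∀ s ∈ Icc (h u) u, f (x s) ≤ q) → F u ≤ q
  ge_of_forall_ge : ∀ u, 0 ≤ u → ∀ q, (∀ s ∈ Icc (h u) u, q ≤ f (x s)) → q ≤ F u

theorem isDelayAverage_integral {f h x : ℝ → ℝ} {μ : ℝ → Measure ℝ} (hfx : Continuous (f ∘ x))
    (hμ_prob : ∀ t : ℝ, 0 ≤ t → IsProbabilityMeasure (μ t))
    (hμ_supp : ∀ t : ℝ, 0 ≤ t → μ t (Icc (h t) t)ᶜ = 0) :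
    IsDelayAverage f h x fun u => ∫ s, f (x s) ∂μ u where
  le_of_forall_le u hu _ hq :=
    haveI := hμ_prob u hu
    integral_le_of_forall_mem_Icc_le hfx (hμ_supp u hu) hq
  ge_of_forall_ge u hu _ hq :=
    haveI := hμ_prob u hu
    le_integral_of_forall_mem_Icc_le hfx (hμ_supp u hu) hq

namespace IsDelayAverage

variable {f h x F : ℝ → ℝ}

theorem eventually_le (hm : IsDelayAverage f h x F) (hh : Tendsto h atTop atTop) {β : ℝ}
    (hfx : ∀ᶠ s in atTop, f (x s) ≤ β) : ∀ᶠ u in atTop, F u ≤ β := by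
  obtain ⟨S, hS⟩ := eventually_atTop.1 hfx
  filter_upwards [hh.eventually_ge_atTop S, eventually_ge_atTop 0] with u hu hu0
  exact hm.le_of_forall_le u hu0 β fun s hs => hS s (hu.trans hs.1)

theorem eventually_ge (hm : IsDelayAverage f h x F) (hh : Tendsto h atTop atTop) {β : ℝ}
    (hfx : ∀ᶠ s in atTop, β ≤ f (x s)) : ∀ᶠ u in atTop, β ≤ F u := by
  obtain ⟨S, hS⟩ := eventually_atTop.1 hfx
  filter_upwards [hh.eventually_ge_atTop S, eventually_ge_atTop 0] with u hu hu0
  exact hm.ge_of_forall_ge u hu0 β fun s hs => hS s (hu.trans hs.1)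

end IsDelayAverage

namespace IsRelaxation

variable {f h r x F : ℝ → ℝ}

theorem pos_of_isDelayAverage (hs : IsRelaxation r F x) (hm : IsDelayAverage f h x F) {C : ℝ}
    (hrC : ∀ᵐ u, r u ≤ C) (hf : ∀ y, 0 ≤ y → 0 ≤ f y) (hx_neg : ∀ s ≤ 0, 0 ≤ x s)
    (hx0 : 0 < x 0) {t : ℝ} (ht : 0 ≤ t) : 0 < x t := by
  refine hs.pos hrC hx0 (fun u hu hx => hm.ge_of_forall_ge u hu.le 0 fun s hs' => hf _ ?_) ht
  rcases le_or_gt s 0 with hs0 | hs0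
  · exact hx_neg s hs0
  · exact (hx s ⟨hs0.le, hs'.2⟩).le

theorem exists_forall_le (hs : IsRelaxation r F x) (hm : IsDelayAverage f h x F)
    (hf : Continuous f) {K B : ℝ} (hd : CrossesDiagonalAt f K) (hx : ∀ s, 0 ≤ x s)
    (hB : ∀ s ≤ 0, x s ≤ B) : ∃ Q, K < Q ∧ ∀ t, x t ≤ Q := by
  obtain ⟨Q, hQ⟩ := exists_gt (max (max K (sSup (f '' Icc 0 K))) B)
  obtain ⟨⟨hKQ, hPQ⟩, hBQ⟩ := max_lt_iff.1 hQ |>.imp_left max_lt_iff.1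
  have hQ0 : 0 ≤ Q := (hx 0).trans ((hB 0 le_rfl).trans hBQ.le)
  refine ⟨Q, hKQ, fun t => ?_⟩
  rcases le_or_gt t 0 with ht | ht
  · exact (hB t ht).trans hBQ.le
  -- past values stay in `[0, Q]`, where `f` stays below `max_{[0, Q]} f < Q`
  refine (hs.lt_of_forall_le le_rfl (max_lt (hd.sSup_image_Icc_lt hf hQ0 hPQ) hBQ)
    ((hB 0 le_rfl).trans (le_max_right _ _)) (fun u hu hxu => ?_) ht.le).le
  refine hm.le_of_forall_le u hu.le _ fun s hs' => le_max_of_le_left <|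
    le_csSup (isCompact_Icc.bddAbove_image hf.continuousOn) (mem_image_of_mem f ⟨hx s, ?_⟩)
  rcases le_or_gt s 0 with hs0 | hs0
  · exact (hB s hs0).trans hBQ.le
  · exact (hxu s ⟨hs0.le, hs'.2⟩).le

theorem exists_pos_eventually_le (hs : IsRelaxation r F x) (hm : IsDelayAverage f h x F)
    (hf : Continuous f) {K Q : ℝ} (hd : CrossesDiagonalAt f K) (hK : 0 < K)
    (hh : Tendsto h atTop atTop) (hpos : ∀ t, 0 ≤ t → 0 < x t) (hQ : ∀ t, x t ≤ Q) (hKQ : K ≤ Q) :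
    ∃ c, 0 < c ∧ ∀ᶠ t in atTop, c ≤ x t := by
  obtain ⟨T, hT⟩ := eventually_atTop.1 ((hh.eventually_ge_atTop 0).and (eventually_ge_atTop 0))
  have hT0 : 0 ≤ T := (hT T le_rfl).2
  obtain ⟨s₀, hs₀, hmin⟩ :=
    isCompact_Icc.exists_isMinOn (nonempty_Icc.2 hT0) hs.continuous.continuousOn
  obtain ⟨c, hc0, hcx, hcf⟩ := hd.exists_lt_sInf_image_Icc hf hK hKQ (hpos s₀ hs₀.1)
  refine ⟨c, hc0, eventually_atTop.2 ⟨T, fun t ht => (hs.lt_of_forall_ge hT0 (lt_min hcf hcx)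
    ((min_le_right _ _).trans (hmin ⟨hT0, le_rfl⟩)) (fun u hu hxu => ?_) ht).le⟩⟩
  refine hm.ge_of_forall_ge u (hT0.trans hu.le) _ fun s hs' => min_le_of_left_le <|
    csInf_le (isCompact_Icc.bddBelow_image hf.continuousOn) (mem_image_of_mem f ⟨?_, hQ s⟩)
  have hs0 : 0 ≤ s := (hT u hu.le).1.trans hs'.1
  rcases le_or_gt s T with hsT | hTs
  · exact hcx.le.trans (hmin ⟨hs0, hsT⟩)
  · exact (hxu s ⟨hTs.le, hs'.2⟩).le

theorem limsup_le_sSup_image_Icc (hs : IsRelaxation r F x) (hm : IsDelayAverage f h x F)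
    (hf : Continuous f) (hh : Tendsto h atTop atTop) (hloc : LocallyIntegrable r)
    (hdiv : ∀ a, Tendsto (fun t => ∫ u in a..t, r u) atTop atTop) {p q : ℝ}
    (hx : ∀ᶠ t in atTop, x t ∈ Icc p q) : limsup x atTop ≤ sSup (f '' Icc p q) :=
  hs.limsup_le hloc hdiv (hx.mono fun _ ht => ht.1) <| hm.eventually_le hh <| hx.mono fun _ ht =>
    le_csSup (isCompact_Icc.bddAbove_image hf.continuousOn) (mem_image_of_mem f ht)

theorem sInf_image_Icc_le_liminf (hs : IsRelaxation r F x) (hm : IsDelayAverage f h x F)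
    (hf : Continuous f) (hh : Tendsto h atTop atTop) (hloc : LocallyIntegrable r)
    (hdiv : ∀ a, Tendsto (fun t => ∫ u in a..t, r u) atTop atTop) {p q : ℝ}
    (hx : ∀ᶠ t in atTop, x t ∈ Icc p q) : sInf (f '' Icc p q) ≤ liminf x atTop :=
  hs.le_liminf hloc hdiv (hx.mono fun _ ht => ht.2) <| hm.eventually_ge hh <| hx.mono fun _ ht =>
    csInf_le (isCompact_Icc.bddBelow_image hf.continuousOn) (mem_image_of_mem f ht)

theorem limsup_le_sSup_and_sInf_le_liminf (hs : IsRelaxation r F x)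
    (hm : IsDelayAverage f h x F) (hf : Continuous f) (hh : Tendsto h atTop atTop)
    (hloc : LocallyIntegrable r) (hdiv : ∀ a, Tendsto (fun t => ∫ u in a..t, r u) atTop atTop)
    (hbdd : IsBoundedUnder (· ≤ ·) atTop x) (hbdd' : IsBoundedUnder (· ≥ ·) atTop x) :
    limsup x atTop ≤ sSup (f '' Icc (liminf x atTop) (limsup x atTop)) ∧
      sInf (f '' Icc (liminf x atTop) (limsup x atTop)) ≤ liminf x atTop := by
  have hx : ∀ ε > 0, ∀ᶠ t in atTop, x t ∈ Icc (liminf x atTop - ε) (limsup x atTop + ε) :=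
    fun ε hε => (eventually_lt_of_lt_liminf (sub_lt_self _ hε) hbdd').and
      (eventually_lt_of_limsup_lt (lt_add_of_pos_right _ hε) hbdd) |>.mono fun _ ht =>
        ⟨ht.1.le, ht.2.le⟩
  have hmM := liminf_le_limsup hbdd hbdd'
  exact ⟨le_sSup_image_Icc_of_forall_pos hf hmM fun ε hε =>
      hs.limsup_le_sSup_image_Icc hm hf hh hloc hdiv (hx ε hε),
    sInf_image_Icc_le_of_forall_pos hf hmM fun ε hε =>
      hs.sInf_image_Icc_le_liminf hm hf hh hloc hdiv (hx ε hε)⟩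

end IsRelaxation

theorem isRelaxation_of_eq_integral {f h r x : ℝ → ℝ} {μ : ℝ → Measure ℝ} {B : ℝ}
    (hf : Continuous f) (hx : Continuous x) (hr : ∀ u, 0 ≤ r u) (hloc : LocallyIntegrable r)
    (hμ_prob : ∀ t : ℝ, 0 ≤ t → IsProbabilityMeasure (μ t))
    (hμ_supp : ∀ t : ℝ, 0 ≤ t → μ t (Icc (h t) t)ᶜ = 0)
    (hμ_meas : ∀ g : ℝ → ℝ, Measurable g → (∃ C : ℝ, ∀ y : ℝ, |g y| ≤ C) →
      Measurable (fun t => ∫ s, g s ∂(μ t)))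
    (hB : ∀ s ≤ 0, |x s| ≤ B)
    (hsol : ∀ t, 0 ≤ t → x t = x 0 + ∫ u in 0..t, r u * ((∫ s, f (x s) ∂μ u) - x u)) :
    IsRelaxation r (fun u => ∫ s, f (x s) ∂μ u) x where
  continuous := hx
  rate_nonneg := hr
  eq_integral := hsol
  integrableOn b := by
    obtain ⟨A, hA⟩ : ∃ A, ∀ s ≤ b, |x s| ≤ A := by
      obtain ⟨A₀, hA₀⟩ := (isCompact_Icc (a := 0) (b := b)).exists_bound_of_continuousOn
        hx.continuousOn
      refine ⟨max B A₀, fun s hs => ?_⟩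
      rcases le_or_gt s 0 with hs0 | hs0
      · exact (hB s hs0).trans (le_max_left _ _)
      · exact (hA₀ s ⟨hs0.le, hs⟩).trans (le_max_right _ _)
    obtain ⟨D, hD⟩ := (isCompact_Icc (a := -A) (b := A)).exists_bound_of_continuousOn
      hf.continuousOn
    -- truncating at `b` makes the integrand globally bounded, as `hμ_meas` requires
    set g := fun s => f (x (min s b))
    have hgD : ∀ s, |g s| ≤ D := fun s => hD _ (abs_le.1 (hA _ (min_le_right _ _)))
    have hFg : ∀ u ∈ Icc 0 b, ∫ s, f (x s) ∂μ u = ∫ s, g s ∂μ u := fun u hu =>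
      integral_congr_ae <| (ae_iff.2 (hμ_supp u hu.1)).mono fun s hs => by
        simp only [g, min_eq_left (hs.2.trans hu.2)]
    have hFD : ∀ u, 0 ≤ u → |∫ s, g s ∂μ u| ≤ D := fun u hu => by
      have := hμ_prob u hu
      simpa using norm_integral_le_of_norm_le_const (μ := μ u) (f := g)
        (.of_forall fun s => (hgD s : ‖g s‖ ≤ D))
    have hg : Continuous g := hf.comp (hx.comp (continuous_id.min continuous_const))
    refine IntegrableOn.congr_fun (f := fun u => r u * ((∫ s, g s ∂μ u) - x u)) ?_
      (fun u hu => by simp only [hFg u hu]) measurableSet_Icc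
    refine (hloc.integrableOn_isCompact isCompact_Icc).mul_bdd (c := D + A)
      ((hμ_meas g hg.measurable ⟨D, hgD⟩).sub hx.measurable).aestronglyMeasurable ?_
    filter_upwards [ae_restrict_mem measurableSet_Icc] with u hu
    exact (abs_sub _ _).trans (add_le_add (hFD u hu.1) (hA u hu.2))

theorem distributed_delay_stability_minmax_condition_general
    (f : ℝ → ℝ) (K : ℝ) (hK : 0 < K)
    (h r : ℝ → ℝ) (μ : ℝ → Measure ℝ) (φ : ℝ → ℝ)
    (hf_cont : Continuous f)
    (hf_nonneg : ∀ y : ℝ, 0 ≤ y → 0 ≤ f y)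
    (hf_below : ∀ y : ℝ, 0 < y → y < K → y < f y)
    (hf_above : ∀ y : ℝ, K < y → 0 < f y ∧ f y < y)
    (hh_tend : Tendsto h atTop atTop)
    (hr_meas : Measurable r)
    (hr_nonneg : ∀ t : ℝ, 0 ≤ r t)
    (hr_bdd : ∃ C : ℝ, ∀ᵐ t ∂volume, r t ≤ C)
    (hr_div : ¬ IntegrableOn r (Ici (0 : ℝ)))
    (hμ_prob : ∀ t : ℝ, 0 ≤ t → IsProbabilityMeasure (μ t))
    (hμ_supp : ∀ t : ℝ, 0 ≤ t → μ t (Icc (h t) t)ᶜ = 0)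
    (hμ_meas : ∀ g : ℝ → ℝ, Measurable g → (∃ C : ℝ, ∀ y : ℝ, |g y| ≤ C) →
      Measurable (fun t => ∫ s, g s ∂(μ t)))
    (hφ_bdd : ∃ C : ℝ, ∀ t : ℝ, t ≤ 0 → |φ t| ≤ C)
    (hφ_nonneg : ∀ t : ℝ, t ≤ 0 → 0 ≤ φ t)
    (hφ_pos : 0 < φ 0)
    (hcond : ∀ a : ℝ, 0 < a → a < K →
      K < sSup (f '' Icc a K) → a < sInf (f '' Icc K (sSup (f '' Icc a K))))
    (x : ℝ → ℝ)
    (hx_cont : Continuous x)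
    (hx_init : ∀ t : ℝ, t ≤ 0 → x t = φ t)
    (hx_sol : ∀ t : ℝ, 0 ≤ t →
      x t = φ 0 + ∫ u in (0:ℝ)..t, r u * ((∫ s, f (x s) ∂(μ u)) - x u))
    :
    Tendsto x atTop (nhds K) := by
  obtain ⟨C, hrC⟩ := hr_bdd
  obtain ⟨B, hB⟩ := hφ_bdd
  have hloc : LocallyIntegrable r := (locallyIntegrable_const C).mono hr_meas.aestronglyMeasurable
    (hrC.mono fun u hu => by simpa [abs_of_nonneg (hr_nonneg u)] using hu.trans (le_abs_self C))
  have hd : CrossesDiagonalAt f K :=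
    ⟨hf_below, fun y hy => (hf_above y hy).1, fun y hy => (hf_above y hy).2⟩
  have hx0 : x 0 = φ 0 := hx_init 0 le_rfl
  have hxB : ∀ s ≤ 0, |x s| ≤ B := fun s hs => hx_init s hs ▸ hB s hs
  have hs := isRelaxation_of_eq_integral hf_cont hx_cont hr_nonneg hloc hμ_prob hμ_supp hμ_meas hxB
    fun t ht => by rw [hx0]; exact hx_sol t ht
  have hm := isDelayAverage_integral (f := f) (hf_cont.comp hx_cont) hμ_prob hμ_supp
  have hx_neg : ∀ s ≤ 0, 0 ≤ x s := fun s hs => hx_init s hs ▸ hφ_nonneg s hs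
  have hpos : ∀ t, 0 ≤ t → 0 < x t := fun t ht =>
    hs.pos_of_isDelayAverage hm hrC hf_nonneg hx_neg (hx0 ▸ hφ_pos) ht
  have hx_nonneg : ∀ s, 0 ≤ x s := fun s =>
    (le_or_gt s 0).elim (hx_neg s) fun hs0 => (hpos s hs0.le).le
  obtain ⟨Q, hKQ, hQ⟩ := hs.exists_forall_le hm hf_cont hd hx_nonneg
    fun s hs0 => (le_abs_self _).trans (hxB s hs0)
  obtain ⟨c, hc, hcx⟩ := hs.exists_pos_eventually_le hm hf_cont hd hK hh_tend hpos hQ hKQ.le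
  have hbdd : IsBoundedUnder (· ≤ ·) atTop x := isBoundedUnder_of_eventually_le (.of_forall hQ)
  have hbdd' : IsBoundedUnder (· ≥ ·) atTop x :=
    isBoundedUnder_of_eventually_ge (.of_forall hx_nonneg)
  obtain ⟨hM, hm'⟩ := hs.limsup_le_sSup_and_sInf_le_liminf hm hf_cont hh_tend hloc
    (tendsto_intervalIntegral_atTop_of_not_integrableOn hr_nonneg hloc hr_div) hbdd hbdd'
  have hm0 : 0 < liminf x atTop := hc.trans_le (le_liminf_of_le hbdd.isCoboundedUnder_ge hcx)
  obtain ⟨hmK, hMK⟩ := hd.eq_of_le_sSup_of_sInf_le hf_cont hK (hcond _ hm0) hm0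
    (liminf_le_limsup hbdd hbdd') hM hm'
  exact tendsto_of_liminf_eq_limsup hmK hMK hbdd hbdd'

theorem distributed_delay_stability_minmax_condition
    (f : ℝ → ℝ) (L K : ℝ) (hL : 0 ≤ L) (hK : 0 < K)
    (h r : ℝ → ℝ) (μ : ℝ → Measure ℝ) (φ : ℝ → ℝ)
    (hf_cont : Continuous f)
    (hf_nonneg : ∀ y : ℝ, 0 ≤ y → 0 ≤ f y)
    (hf_lip : ∀ u v : ℝ, 0 ≤ u → 0 ≤ v → |f u - f v| ≤ L * |u - v|)
    (hf_zero : f 0 = 0)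
    (hf_below : ∀ y : ℝ, 0 < y → y < K → y < f y)
    (hf_above : ∀ y : ℝ, K < y → 0 < f y ∧ f y < y)
    (hh_meas : Measurable h)
    (hh_le : ∀ t : ℝ, 0 ≤ t → h t ≤ t)
    (hh_tend : Tendsto h atTop atTop)
    (hr_meas : Measurable r)
    (hr_nonneg : ∀ t : ℝ, 0 ≤ r t)
    (hr_bdd : ∃ C : ℝ, ∀ᵐ t ∂volume, r t ≤ C)
    (hr_div : ¬ IntegrableOn r (Ici (0 : ℝ)))
    (hμ_prob : ∀ t : ℝ, 0 ≤ t → IsProbabilityMeasure (μ t))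
    (hμ_supp : ∀ t : ℝ, 0 ≤ t → μ t (Icc (h t) t)ᶜ = 0)
    (hμ_meas : ∀ g : ℝ → ℝ, Measurable g → (∃ C : ℝ, ∀ y : ℝ, |g y| ≤ C) →
      Measurable (fun t => ∫ s, g s ∂(μ t)))
    (hφ_cont : ContinuousOn φ (Iic (0 : ℝ)))
    (hφ_bdd : ∃ C : ℝ, ∀ t : ℝ, t ≤ 0 → |φ t| ≤ C)
    (hφ_nonneg : ∀ t : ℝ, t ≤ 0 → 0 ≤ φ t)
    (hφ_pos : 0 < φ 0)
    (hcond : ∀ a : ℝ, 0 < a → a < K →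
      K < sSup (f '' Icc a K) → a < sInf (f '' Icc K (sSup (f '' Icc a K))))
    (x : ℝ → ℝ)
    (hx_cont : Continuous x)
    (hx_init : ∀ t : ℝ, t ≤ 0 → x t = φ t)
    (hx_sol : ∀ t : ℝ, 0 ≤ t →
      x t = φ 0 + ∫ u in (0:ℝ)..t, r u * ((∫ s, f (x s) ∂(μ u)) - x u))
    :
    Tendsto x atTop (nhds K) :=
  distributed_delay_stability_minmax_condition_general f K hK h r μ φ hf_cont hf_nonneg hf_below
    hf_above hh_tend hr_meas hr_nonneg hr_bdd hr_div hμ_prob hμ_supp hμ_meas hφ_bdd hφ_nonneg hφ_pos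
    hcond x hx_cont hx_init hx_sol
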